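/- Consider the problem: minimize (1/2)(w-(β⁺-β⁻))² + (1/2)‖z-θ‖² + λ(β⁺+β⁻) + λ‖θ‖₁ subject to β⁺,β⁻ ≥ 0, ‖θ‖₁ ≤ β⁺+β⁻, with λ > 0 and w ≥ 0. Suppose ‖z‖_∞ ≤ w and λ ∈ [λ̃₁, w), where λ̃₁ = inf{μ ≥ 0 : ‖S(z,μ)‖₁ + μ ≤ w}. Then the unique solution is β⁺ = w - λ, β⁻ = 0, θ = S(z,λ) (componentwise soft-thresholding). -/

import Mathlib

/-!
Write `d = β⁺ - β⁻`. The objective equals `½(w - d)² + λd + 2λβ⁻ + ∑ₖ (½(zₖ - θₖ)² + λ|θₖ|)`,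
and `½(w - d)² + λd = ½λ² + λ(w - λ) + ½(d - (w - λ))²`. Soft-thresholding minimises each
coordinate term with quadratic growth, so, even without the constraint `‖θ‖₁ ≤ β⁺ + β⁻`, the
objective exceeds its value at `(w - λ, 0, S(z, λ))` by
`½(d - (w - λ))² + 2λβ⁻ + ½‖θ - S(z, λ)‖²`, which vanishes only there.
That point is feasible: `μ ↦ ‖S(z, μ)‖₁ + μ` is continuous and convex and takes the value `w`
at `μ = w` because `‖z‖_∞ ≤ w`, so its sublevel set `{μ ≥ 0 | · ≤ w}` is a closed interval
containing `λ̃₁` and `w`, hence `λ`.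
-/

noncomputable def softTh (x t : ℝ) : ℝ := Real.sign x * max (|x| - t) 0

noncomputable def objFn (n : ℕ) (lam1 lam2 w : ℝ) (z : Fin n → ℝ)
    (p : ℝ × ℝ × (Fin n → ℝ)) : ℝ :=
  (1/2) * (w - (p.1 - p.2.1))^2 + (1/2) * (∑ k, (z k - p.2.2 k)^2)
    + lam1 * (p.1 + p.2.1) + lam2 * ∑ k, |p.2.2 k|

def Feasible (n : ℕ) (p : ℝ × ℝ × (Fin n → ℝ)) : Prop :=
  0 ≤ p.1 ∧ 0 ≤ p.2.1 ∧ (∑ k, |p.2.2 k|) ≤ p.1 + p.2.1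

lemma ConvexOn.fun_sum {𝕜 E β ι : Type*} [Semiring 𝕜] [PartialOrder 𝕜] [AddCommMonoid E]
    [AddCommMonoid β] [PartialOrder β] [IsOrderedAddMonoid β] [SMul 𝕜 E] [Module 𝕜 β]
    {s : Set E} (hs : Convex 𝕜 s) (t : Finset ι) {f : ι → E → β}
    (hf : ∀ i ∈ t, ConvexOn 𝕜 s (f i)) : ConvexOn 𝕜 s fun x => ∑ i ∈ t, f i x := by
  classical
  induction t using Finset.induction_on with
  | empty => simpa using convexOn_const (0 : β) hs
  | insert i t hi ih =>
    simp_rw [Finset.sum_insert hi]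
    exact (hf i (Finset.mem_insert_self i t)).add
      (ih fun j hj => hf j (Finset.mem_insert_of_mem hj))

lemma abs_softTh (x t : ℝ) : |softTh x t| = |Real.sign x| * max (|x| - t) 0 := by
  rw [softTh, abs_mul, abs_of_nonneg (le_max_right (|x| - t) 0)]

lemma softTh_eq_zero_of_abs_le {x t : ℝ} (h : |x| ≤ t) : softTh x t = 0 := by
  rw [softTh, max_eq_right (sub_nonpos.2 h), mul_zero]

lemma continuous_softTh (x : ℝ) : Continuous (softTh x) := by
  unfold softTh
  fun_prop

lemma convexOn_abs_softTh (x : ℝ) : ConvexOn ℝ Set.univ fun t => |softTh x t| := by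
  simp_rw [abs_softTh]
  exact (((convexOn_const |x| convex_univ).sub (concaveOn_id convex_univ)).sup
    (convexOn_const 0 convex_univ)).smul (abs_nonneg _)

lemma abs_sub_softTh_le (x : ℝ) {t : ℝ} (ht : 0 ≤ t) : |x - softTh x t| ≤ t := by
  rcases le_total |x| t with h | h
  · rwa [softTh_eq_zero_of_abs_le h, sub_zero]
  rcases lt_trichotomy x 0 with hx | rfl | hx
  · rw [abs_of_neg hx] at h
    rw [softTh, Real.sign_of_neg hx, abs_of_neg hx, max_eq_left (sub_nonneg.2 h), abs_le]
    constructor <;> linarith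
  · simpa [softTh] using ht
  · rw [abs_of_pos hx] at h
    rw [softTh, Real.sign_of_pos hx, abs_of_pos hx, max_eq_left (sub_nonneg.2 h), abs_le]
    constructor <;> linarith

lemma sub_softTh_mul_softTh (x t : ℝ) : (x - softTh x t) * softTh x t = t * |softTh x t| := by
  rcases le_total |x| t with h | h
  · simp [softTh_eq_zero_of_abs_le h]
  rcases lt_trichotomy x 0 with hx | rfl | hx
  · rw [abs_of_neg hx] at h
    rw [softTh, Real.sign_of_neg hx, abs_of_neg hx, max_eq_left (by linarith),
      abs_of_nonpos (by linarith)]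
    ring
  · simp [softTh]
  · rw [abs_of_pos hx] at h
    rw [softTh, Real.sign_of_pos hx, abs_of_pos hx, max_eq_left (by linarith),
      abs_of_nonneg (by linarith)]
    ring

lemma softTh_three_point (x θ : ℝ) {t : ℝ} (ht : 0 ≤ t) :
    (1/2) * (x - softTh x t)^2 + t * |softTh x t| + (1/2) * (θ - softTh x t)^2
      ≤ (1/2) * (x - θ)^2 + t * |θ| := by
  have hsub : (x - softTh x t) * θ ≤ t * |θ| :=
    (le_abs_self _).trans (abs_mul _ θ ▸ mul_le_mul_of_nonneg_right (abs_sub_softTh_le x ht)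
      (abs_nonneg θ))
  linear_combination hsub - sub_softTh_mul_softTh x t

lemma objFn_add_le (n : ℕ) (lam1 lam2 w : ℝ) (z : Fin n → ℝ) (hlam2 : 0 ≤ lam2)
    (q : ℝ × ℝ × (Fin n → ℝ)) :
    objFn n lam1 lam2 w z (w - lam1, 0, fun k => softTh (z k) lam2)
        + ((1/2) * (q.1 - q.2.1 - (w - lam1))^2 + 2 * lam1 * q.2.1
          + (1/2) * ∑ k, (q.2.2 k - softTh (z k) lam2)^2)
      ≤ objFn n lam1 lam2 w z q := by
  have hsum := Finset.sum_le_sum fun k (_ : k ∈ Finset.univ) =>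
    softTh_three_point (z k) (q.2.2 k) hlam2
  simp only [Finset.sum_add_distrib, ← Finset.mul_sum] at hsum
  simp only [objFn]
  linear_combination hsum

lemma objFn_le_objFn (n : ℕ) {lam1 lam2 : ℝ} (w : ℝ) (z : Fin n → ℝ) (hlam1 : 0 ≤ lam1)
    (hlam2 : 0 ≤ lam2) {q : ℝ × ℝ × (Fin n → ℝ)} (hq : 0 ≤ q.2.1) :
    objFn n lam1 lam2 w z (w - lam1, 0, fun k => softTh (z k) lam2)
      ≤ objFn n lam1 lam2 w z q := by
  refine le_trans (le_add_of_nonneg_right ?_) (objFn_add_le n lam1 lam2 w z hlam2 q)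
  have := Finset.sum_nonneg fun k (_ : k ∈ Finset.univ) =>
    sq_nonneg (q.2.2 k - softTh (z k) lam2)
  positivity

lemma eq_of_objFn_le (n : ℕ) {lam1 lam2 : ℝ} (w : ℝ) (z : Fin n → ℝ) (hlam1 : 0 < lam1)
    (hlam2 : 0 ≤ lam2) {q : ℝ × ℝ × (Fin n → ℝ)} (hq : 0 ≤ q.2.1)
    (hle : objFn n lam1 lam2 w z q
      ≤ objFn n lam1 lam2 w z (w - lam1, 0, fun k => softTh (z k) lam2)) :
    q = (w - lam1, 0, fun k => softTh (z k) lam2) := by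
  have hgap := (objFn_add_le n lam1 lam2 w z hlam2 q).trans hle
  have hsq := fun k (_ : k ∈ Finset.univ) => sq_nonneg (q.2.2 k - softTh (z k) lam2)
  have hsum := Finset.sum_nonneg hsq
  have hd : (q.1 - q.2.1 - (w - lam1))^2 = 0 := by
    nlinarith [sq_nonneg (q.1 - q.2.1 - (w - lam1))]
  have hb : q.2.1 = 0 := by nlinarith
  have hθ : ∑ k, (q.2.2 k - softTh (z k) lam2)^2 = 0 := by nlinarith
  rw [Finset.sum_eq_zero_iff_of_nonneg hsq] at hθ
  refine Prod.ext (by linarith [pow_eq_zero_iff two_ne_zero |>.1 hd]) (Prod.ext hb ?_)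
  funext k
  exact sub_eq_zero.1 (pow_eq_zero_iff two_ne_zero |>.1 (hθ k (Finset.mem_univ k)))

lemma sum_abs_softTh_add_le {ι : Type*} [Fintype ι] {z : ι → ℝ} {w lam : ℝ}
    (hzw : (⨆ k, |z k|) ≤ w)
    (hlow : sInf {mu : ℝ | 0 ≤ mu ∧ (∑ k, |softTh (z k) mu|) + mu ≤ w} ≤ lam)
    (hup : lam ≤ w) :
    (∑ k, |softTh (z k) lam|) + lam ≤ w := by
  set T := {mu : ℝ | 0 ≤ mu ∧ (∑ k, |softTh (z k) mu|) + mu ≤ w}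
  have hzk : ∀ k, |z k| ≤ w := fun k => (le_ciSup (Set.finite_range _).bddAbove k).trans hzw
  have hw : w ∈ T := ⟨(Real.iSup_nonneg fun k => abs_nonneg (z k)).trans hzw,
    by simp [softTh_eq_zero_of_abs_le (hzk _)]⟩
  have hclosed : IsClosed T := isClosed_Ici.inter (isClosed_le
    ((continuous_finsetSum _ fun k _ => (continuous_softTh (z k)).abs).add continuous_id)
    continuous_const)
  have hconv : Convex ℝ T := ((ConvexOn.fun_sum (convex_Ici 0) Finset.univ fun k _ =>
    (convexOn_abs_softTh (z k)).subset (Set.subset_univ _) (convex_Ici 0)).add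
    (convexOn_id (convex_Ici 0))).convex_le w
  have hinf : sInf T ∈ T := hclosed.csInf_mem ⟨w, hw⟩ ⟨0, fun _ h => h.1⟩
  exact (hconv.ordConnected.out hinf hw ⟨hlow, hup⟩).2

theorem stmt_12 (n : ℕ) (w : ℝ) (z : Fin n → ℝ) (lam : ℝ) (hlam : 0 < lam)
    (hzw : (⨆ k, |z k|) ≤ w)
    (hlow : sInf {mu : ℝ | 0 ≤ mu ∧ (∑ k, |softTh (z k) mu|) + mu ≤ w} ≤ lam)
    (hup : lam < w) :
    ∀ p : ℝ × ℝ × (Fin n → ℝ),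
      (Feasible n p ∧ ∀ q : ℝ × ℝ × (Fin n → ℝ), Feasible n q →
          objFn n lam lam w z p ≤ objFn n lam lam w z q)
        ↔ p = (w - lam, 0, fun k => softTh (z k) lam) := by
  have hfeas : Feasible n (w - lam, 0, fun k => softTh (z k) lam) := by
    have := sum_abs_softTh_add_le hzw hlow hup.le
    exact ⟨sub_nonneg.2 hup.le, le_rfl, by dsimp only; linarith⟩
  intro p
  constructor
  · rintro ⟨hp, hmin⟩
    exact eq_of_objFn_le n w z hlam hlam.le hp.2.1 (hmin _ hfeas)
  · rintro rfl
    exact ⟨hfeas, fun q hq => objFn_le_objFn n w z hlam.le hlam.le hq.2.1⟩
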